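/- arXiv:0904.4189 — 3 statements merged into one kernel-verified Lean document; each statement's English description precedes it below -/
import Mathlib

section
/- The polynomial g(z,y) = y^3 - (9/106)q^2 z + (7655424/7890481)q^4 z^5 - (190316544/418195493)q^5 z^7 - (105344/148877)q^3 z^3 - (132/53)q z y^2 + (3840/2809)q^2 z^3 y^2 + (1568669696/22164361129)q^6 z^9 + (9/106)q y + (6240/2809)q^2 z^2 y - (337920/148877)q^3 z^4 y + (4325376/7890481)q^4 z^6 y satisfies (zy+1)·∂g/∂z + (3y^2 - (88/53)qzy - (3264/2809)q^2 z^2 + q)·∂g/∂y = 9y·g, i.e., it is an invariant algebraic curve of degree nine of the quadratic system dz/dt = zy+1, dy/dt = 3y^2 - (88/53)qzy - (3264/2809)q^2 z^2 + q with cofactor 9y. -/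
open MvPolynomial

noncomputable section

namespace Stmt2
set_option maxHeartbeats 4000000

def z : MvPolynomial (Fin 3) ℚ := X 0
def y : MvPolynomial (Fin 3) ℚ := X 1
def q : MvPolynomial (Fin 3) ℚ := X 2

/-- P(z,y) = zy + 1 -/
def P : MvPolynomial (Fin 3) ℚ := z * y + 1

/-- Q(z,y) -/
def Qv : MvPolynomial (Fin 3) ℚ :=
    C ((3 : ℚ)/1) * y^2 +
    C ((-88 : ℚ)/53) * q * z * y +
    C ((-3264 : ℚ)/2809) * q^2 * z^2 +
    C ((1 : ℚ)/1) * q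

/-- the invariant algebraic curve -/
def g : MvPolynomial (Fin 3) ℚ :=
    C ((1 : ℚ)/1) * y^3 +
    C ((-9 : ℚ)/106) * q^2 * z +
    C ((7655424 : ℚ)/7890481) * q^4 * z^5 +
    C ((-190316544 : ℚ)/418195493) * q^5 * z^7 +
    C ((-105344 : ℚ)/148877) * q^3 * z^3 +
    C ((-132 : ℚ)/53) * q * z * y^2 +
    C ((3840 : ℚ)/2809) * q^2 * z^3 * y^2 +
    C ((1568669696 : ℚ)/22164361129) * q^6 * z^9 +
    C ((9 : ℚ)/106) * q * y +
    C ((6240 : ℚ)/2809) * q^2 * z^2 * y +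
    C ((-337920 : ℚ)/148877) * q^3 * z^4 * y +
    C ((4325376 : ℚ)/7890481) * q^4 * z^6 * y

lemma ccm (a b : ℚ) (p : MvPolynomial (Fin 3) ℚ) : C a * (C b * p) = C (a * b) * p := by
  rw [← mul_assoc, ← C_mul]

/-- 44328722258 * g, with integer coefficients -/
def G : MvPolynomial (Fin 3) ℚ :=
    C (44328722258 : ℚ) * y^3 +
    C (-3763759437 : ℚ) * (q^2 * z) +
    C (43008172032 : ℚ) * (q^4 * z^5) +
    C (-20173553664 : ℚ) * (q^5 * z^7) +
    C (-31366597376 : ℚ) * (q^3 * z^3) +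
    C (-110403610152 : ℚ) * (q * z * y^2) +
    C (60598894080 : ℚ) * (q^2 * z^3 * y^2) +
    C (3137339392 : ℚ) * (q^6 * z^9) +
    C (3763759437 : ℚ) * (q * y) +
    C (98473202880 : ℚ) * (q^2 * z^2 * y) +
    C (-100617031680 : ℚ) * (q^3 * z^4 * y) +
    C (24299962368 : ℚ) * (q^4 * z^6 * y)

/-- 2809 * Qv, with integer coefficients -/
def QG : MvPolynomial (Fin 3) ℚ :=
    C (8427 : ℚ) * y^2 + C (-4664 : ℚ) * (q * z * y) +
    C (-3264 : ℚ) * (q^2 * z^2) + C (2809 : ℚ) * q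

lemma hg : g = C ((1:ℚ)/44328722258) * G := by
  simp only [g, G, mul_add, ccm]
  norm_num
  ring

lemma hq : Qv = C ((1:ℚ)/2809) * QG := by
  simp only [Qv, QG, mul_add, ccm]
  norm_num
  ring

lemma cfold : (C ((1:ℚ)/124519380822722) : MvPolynomial (Fin 3) ℚ) * C (2809:ℚ)
    = C ((1:ℚ)/44328722258) := by rw [← C_mul]; norm_num

lemma csplit : (C ((1:ℚ)/124519380822722) : MvPolynomial (Fin 3) ℚ)
    = C ((1:ℚ)/2809) * C ((1:ℚ)/44328722258) := by rw [← C_mul]; norm_num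

lemma hint : C (2809:ℚ) * P * pderiv 0 G + QG * pderiv 1 G
    = C (2809:ℚ) * ((9 : ℚ) • (y * G)) := by
  simp only [P, QG, G, z, y, q, smul_eq_C_mul]
  simp only [map_add, map_mul, map_pow, pderiv_X_self,
    pderiv_X_of_ne (by decide : (1:Fin 3) ≠ 0), pderiv_X_of_ne (by decide : (2:Fin 3) ≠ 0),
    pderiv_X_of_ne (by decide : (0:Fin 3) ≠ 1), pderiv_X_of_ne (by decide : (2:Fin 3) ≠ 1),
    pderiv_C, Derivation.leibniz_pow, Derivation.leibniz, smul_eq_mul, mul_zero, zero_mul,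
    add_zero, zero_add, mul_one, one_mul, map_one]
  simp only [map_ofNat, map_neg, map_one]
  ring

theorem invariant_curve :
    P * pderiv 0 g + Qv * pderiv 1 g = (9 : ℚ) • (y * g) := by
  have key : P * pderiv 0 g + Qv * pderiv 1 g
      = C ((1:ℚ)/124519380822722) * (C (2809:ℚ) * P * pderiv 0 G + QG * pderiv 1 G) := by
    rw [hg, hq, pderiv_C_mul, pderiv_C_mul, mul_add]
    congr 1
    · rw [show C (2809:ℚ) * P * pderiv 0 G = C (2809:ℚ) * (P * pderiv 0 G) from mul_assoc _ _ _,
        ccm]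
      norm_num
      ring
    · rw [← mul_assoc, csplit]; ring
  rw [key, hint, ← mul_assoc, cfold, hg]
  rw [smul_eq_C_mul, smul_eq_C_mul]
  ring

end Stmt2
end
end

section
/- For the two-parameter quadratic system dz/dt = zy+1, dy/dt = 3y^2 + qzy - q^2 z^2 - q, the degree-twelve polynomial g = ((1/64)q^6 p - (1/288)q^8) z^12 + ((3/32)q^5 p - (1/48)q^7) z^10 + (-(1/24)q^6 y + (3/16)q^4 p y) z^9 + (-(5/96)q^6 + (15/64)q^4 p) z^8 + ((3/4)q^3 p y - (1/6)q^5 y) z^7 + ((3/4)q^2 p y^2 - (13/72)q^5 + (5/16)q^3 p - (1/6)q^4 y^2) z^6 + (-(1/4)q^4 + (9/8)q^2 p) y z^5 + (-(37/96)q^4 + (15/64)q^2 p + (3/2)q p y^2) z^4 + (-(5/6)q^3 y + p y^3 + (3/4)q p y) z^3 + ((3/32)q p + (3/4)p y^2 - (17/48)q^3 + (1/2)q^2 y^2) z^2 + (2q y^3 + (3/16)p y - (17/24)q^2 y) z + (1/64)p + y^4 - (1/3)q y^2 - (1/288)q^2 satisfies (zy+1)·g_z + (3y^2 + qzy - q^2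 z^2 - q)·g_y = 12y·g. -/
open MvPolynomial

noncomputable section

namespace Stmt7

def z : MvPolynomial (Fin 4) ℚ := X 0
def y : MvPolynomial (Fin 4) ℚ := X 1
def q : MvPolynomial (Fin 4) ℚ := X 2
def p : MvPolynomial (Fin 4) ℚ := X 3

/-- P(z,y) = zy + 1 -/
def P : MvPolynomial (Fin 4) ℚ := z * y + 1

/-- Q(z,y) -/
def Qv : MvPolynomial (Fin 4) ℚ :=
    C ((3 : ℚ)/1) * y^2 +
    C ((1 : ℚ)/1) * q * z * y +
    C ((-1 : ℚ)/1) * q^2 * z^2 +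
    C ((-1 : ℚ)/1) * q

/-- the invariant algebraic curve -/
def g : MvPolynomial (Fin 4) ℚ :=
    C ((1 : ℚ)/64) * q^6 * p * z^12 +
    C ((-1 : ℚ)/288) * q^8 * z^12 +
    C ((3 : ℚ)/32) * q^5 * p * z^10 +
    C ((-1 : ℚ)/48) * q^7 * z^10 +
    C ((-1 : ℚ)/24) * q^6 * z^9 * y +
    C ((3 : ℚ)/16) * q^4 * p * z^9 * y +
    C ((-5 : ℚ)/96) * q^6 * z^8 +
    C ((15 : ℚ)/64) * q^4 * p * z^8 +
    C ((3 : ℚ)/4) * q^3 * p * z^7 * y +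
    C ((-1 : ℚ)/6) * q^5 * z^7 * y +
    C ((3 : ℚ)/4) * q^2 * p * z^6 * y^2 +
    C ((-13 : ℚ)/72) * q^5 * z^6 +
    C ((5 : ℚ)/16) * q^3 * p * z^6 +
    C ((-1 : ℚ)/6) * q^4 * z^6 * y^2 +
    C ((-1 : ℚ)/4) * q^4 * z^5 * y +
    C ((9 : ℚ)/8) * q^2 * p * z^5 * y +
    C ((-37 : ℚ)/96) * q^4 * z^4 +
    C ((15 : ℚ)/64) * q^2 * p * z^4 +
    C ((3 : ℚ)/2) * q * p * z^4 * y^2 +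
    C ((-5 : ℚ)/6) * q^3 * z^3 * y +
    C ((1 : ℚ)/1) * p * z^3 * y^3 +
    C ((3 : ℚ)/4) * q * p * z^3 * y +
    C ((3 : ℚ)/32) * q * p * z^2 +
    C ((3 : ℚ)/4) * p * z^2 * y^2 +
    C ((-17 : ℚ)/48) * q^3 * z^2 +
    C ((1 : ℚ)/2) * q^2 * z^2 * y^2 +
    C ((2 : ℚ)/1) * q * z * y^3 +
    C ((3 : ℚ)/16) * p * z * y +
    C ((-17 : ℚ)/24) * q^2 * z * y +
    C ((1 : ℚ)/64) * p +
    C ((1 : ℚ)/1) * y^4 +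
    C ((-1 : ℚ)/3) * q * y^2 +
    C ((-1 : ℚ)/288) * q^2


def G : MvPolynomial (Fin 4) ℚ :=
    9 * q^6 * p * z^12 + (-2) * q^8 * z^12 + 54 * q^5 * p * z^10 + (-12) * q^7 * z^10 +
    (-24) * q^6 * z^9 * y + 108 * q^4 * p * z^9 * y + (-30) * q^6 * z^8 + 135 * q^4 * p * z^8 +
    432 * q^3 * p * z^7 * y + (-96) * q^5 * z^7 * y + 432 * q^2 * p * z^6 * y^2 + (-104) * q^5 * z^6 +
    180 * q^3 * p * z^6 + (-96) * q^4 * z^6 * y^2 + (-144) * q^4 * z^5 * y + 648 * q^2 * p * z^5 * y +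
    (-222) * q^4 * z^4 + 135 * q^2 * p * z^4 + 864 * q * p * z^4 * y^2 + (-480) * q^3 * z^3 * y +
    576 * p * z^3 * y^3 + 432 * q * p * z^3 * y + 54 * q * p * z^2 + 432 * p * z^2 * y^2 +
    (-204) * q^3 * z^2 + 288 * q^2 * z^2 * y^2 + 1152 * q * z * y^3 + 108 * p * z * y +
    (-408) * q^2 * z * y + 9 * p + 576 * y^4 + (-192) * q * y^2 + (-2) * q^2

lemma hG : (C (576:ℚ) : MvPolynomial (Fin 4) ℚ) * g = G := by
  unfold g G z y q p
  simp only [mul_add, ← mul_assoc, ← C_mul]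
  norm_num
  simp only [map_ofNat]

lemma hGinv : ∀ i : Fin 4, (C (576:ℚ) : MvPolynomial (Fin 4) ℚ) * pderiv i g = pderiv i G := by
  intro i
  rw [← hG, ← smul_eq_C_mul, ← smul_eq_C_mul, Derivation.map_smul]

lemma pderiv_ofNat' (i : Fin 4) (n : ℕ) [n.AtLeastTwo] :
    pderiv i (no_index (OfNat.ofNat n) : MvPolynomial (Fin 4) ℚ) = 0 := by
  rw [← map_ofNat (C : ℚ →+* MvPolynomial (Fin 4) ℚ) n, pderiv_C]

set_option maxHeartbeats 4000000 in
lemma keyG : P * pderiv 0 G + Qv * pderiv 1 G = (12:ℚ) • (y * G) := by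
  unfold P Qv G z y q p
  simp only [smul_eq_C_mul, map_ofNat (C : ℚ →+* MvPolynomial (Fin 4) ℚ) 12,
    show (C ((3:ℚ)/1) : MvPolynomial (Fin 4) ℚ) = 3 from by
      rw [show (3:ℚ)/1 = 3 by norm_num]; exact map_ofNat C 3,
    show (C ((1:ℚ)/1) : MvPolynomial (Fin 4) ℚ) = 1 from by norm_num,
    show (C ((-1:ℚ)/1) : MvPolynomial (Fin 4) ℚ) = -1 from by norm_num]
  simp only [map_add, pderiv_mul, pderiv_pow, pderiv_C, pderiv_X, pderiv_one,
    Pi.single_apply, Fin.isValue, Fin.reduceEq, reduceIte, reduceCtorEq,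
    mul_zero, zero_mul, add_zero, zero_add, mul_one, one_mul, ite_true, ite_false,
    pderiv_ofNat', map_ofNat, map_neg, map_one]
  ring

theorem invariant_curve :
    P * pderiv 0 g + Qv * pderiv 1 g = (12 : ℚ) • (y * g) := by
  have h576 : (C (576:ℚ) : MvPolynomial (Fin 4) ℚ) ≠ 0 := by
    simp
  apply mul_left_cancel₀ h576
  calc C (576:ℚ) * (P * pderiv 0 g + Qv * pderiv 1 g)
      = P * (C (576:ℚ) * pderiv 0 g) + Qv * (C (576:ℚ) * pderiv 1 g) := by ring
    _ = P * pderiv 0 G + Qv * pderiv 1 G := by rw [hGinv 0, hGinv 1]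
    _ = (12:ℚ) • (y * G) := keyG
    _ = (12:ℚ) • (y * (C (576:ℚ) * g)) := by rw [hG]
    _ = C (576:ℚ) * ((12:ℚ) • (y * g)) := by
        rw [mul_smul_comm]; ring_nf


end Stmt7
end
end

section
/- For q = 1, the invariant curve polynomial of Corollary 2.1(i), g(z,y) = y^3 - (9/26)z - (2784/28561)z^5 + (296/2197)z^3 + (6144/371293)z^7 - (4096/4826809)z^9 + (9/26)y - (60/169)z^2 y + (960/2197)z^4 y - (1536/28561)z^6 y - (12/13)z y^2 - (120/169)z^3 y^2, is irreducible over ℚ (does not factor into two nonconstant polynomials in ℚ[z,y]). -/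
/-! Read `g` as a monic cubic in `y` over `ℚ[z]`. A monic polynomial over a domain is irreducible
as soon as some specialization of it is, and at `z = 13/2` the cubic becomes
`y³ - 201y² - (85557/26)y - 42241/4`. After the substitution `s = 26y` this is the monic integer
cubic `s³ - 5226s² - 2224482s - 185606954`, which has no root modulo 5, hence no rational root,
so the specialized cubic is irreducible over `ℚ`. -/

theorem Polynomial.Monic.aeval_rat_ne_zero {p : Polynomial ℤ} (hp : p.Monic) {S : Type*}
    [CommRing S] (h : ∀ x : S, Polynomial.aeval x p ≠ 0) (r : ℚ) :
    Polynomial.aeval r p ≠ 0 := by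
  intro hr
  obtain ⟨n, rfl, -⟩ := exists_integer_of_is_root_of_monic hp hr
  have hn : p.eval n = 0 := by
    rw [Polynomial.aeval_algebraMap_apply_eq_algebraMap_eval] at hr
    simpa using hr
  apply h n
  simpa [hn] using Polynomial.aeval_algebraMap_apply_eq_algebraMap_eval (A := S) n p

open MvPolynomial

noncomputable section

namespace Stmt18

def z : MvPolynomial (Fin 2) ℚ := X 0
def y : MvPolynomial (Fin 2) ℚ := X 1

/-- the invariant curve polynomial of Corollary 2.1(i) at q = 1 -/
def g : MvPolynomial (Fin 2) ℚ :=
    C ((1 : ℚ)/1) * y^3 +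
    C ((-9 : ℚ)/26) * z +
    C ((-2784 : ℚ)/28561) * z^5 +
    C ((296 : ℚ)/2197) * z^3 +
    C ((6144 : ℚ)/371293) * z^7 +
    C ((-4096 : ℚ)/4826809) * z^9 +
    C ((9 : ℚ)/26) * y +
    C ((-60 : ℚ)/169) * z^2 * y +
    C ((960 : ℚ)/2197) * z^4 * y +
    C ((-1536 : ℚ)/28561) * z^6 * y +
    C ((-12 : ℚ)/13) * z * y^2 +
    C ((-120 : ℚ)/169) * z^3 * y^2

def polyInY : MvPolynomial (Fin 2) ℚ ≃ₐ[ℚ] Polynomial (MvPolynomial (Fin 1) ℚ) :=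
  (renameEquiv ℚ (Equiv.swap 0 1)).trans (finSuccEquiv ℚ 1)

lemma polyInY_z : polyInY z = Polynomial.C (X 0) := by
  simpa [polyInY, z] using finSuccEquiv_X_succ (R := ℚ) (j := (0 : Fin 1))

lemma polyInY_y : polyInY y = Polynomial.X := by
  simp [polyInY, y, finSuccEquiv_X_zero]

lemma polyInY_C (r : ℚ) : polyInY (C r) = Polynomial.C (C r) := by
  simp [polyInY, finSuccEquiv_apply]

def gCubic : Polynomial (MvPolynomial (Fin 1) ℚ) :=
  Polynomial.X ^ 3 +
    Polynomial.C (C (-12 / 13) * X 0 + C (-120 / 169) * X 0 ^ 3) * Polynomial.X ^ 2 +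
    Polynomial.C (C (9 / 26) + C (-60 / 169) * X 0 ^ 2 + C (960 / 2197) * X 0 ^ 4 +
      C (-1536 / 28561) * X 0 ^ 6) * Polynomial.X +
    Polynomial.C (C (-9 / 26) * X 0 + C (296 / 2197) * X 0 ^ 3 + C (-2784 / 28561) * X 0 ^ 5 +
      C (6144 / 371293) * X 0 ^ 7 + C (-4096 / 4826809) * X 0 ^ 9)

lemma polyInY_g : polyInY g = gCubic := by
  simp only [g, gCubic, map_add, map_mul, map_pow, polyInY_z, polyInY_y, polyInY_C]
  norm_num
  ring

lemma gCubic_monic : gCubic.Monic := by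
  unfold gCubic
  monicity!

def gAtThirteenHalves : Polynomial ℚ :=
  Polynomial.X ^ 3 - Polynomial.C 201 * Polynomial.X ^ 2 -
    Polynomial.C (85557 / 26) * Polynomial.X - Polynomial.C (42241 / 4)

lemma gCubic_map_eval : gCubic.map (eval fun _ => 13 / 2) = gAtThirteenHalves := by
  simp only [gCubic, gAtThirteenHalves, Polynomial.map_add, Polynomial.map_mul, Polynomial.map_pow,
    Polynomial.map_X, Polynomial.map_C, eval_C, eval_X, map_add, map_mul, map_pow]
  simp only [← Polynomial.C_pow, ← Polynomial.C_mul, ← Polynomial.C_add]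
  norm_num
  ring

lemma gAtThirteenHalves_irreducible : Irreducible gAtThirteenHalves := by
  refine Polynomial.irreducible_of_degree_le_three_of_not_isRoot ?_ fun r hr => ?_
  · have : gAtThirteenHalves.natDegree = 3 := by unfold gAtThirteenHalves; compute_degree!
    simp [this]
  -- `p (26 r) = 26³ · gAtThirteenHalves r`
  let p : Polynomial ℤ :=
    Polynomial.X ^ 3 - 5226 * Polynomial.X ^ 2 - 2224482 * Polynomial.X - 185606954
  have hp : p.Monic := by unfold p; monicity!
  have hmod5 : ∀ x : ZMod 5, Polynomial.aeval x p ≠ 0 := by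
    simp only [p, map_sub, map_mul, map_pow, Polynomial.aeval_X, map_ofNat]
    decide
  apply hp.aeval_rat_ne_zero hmod5 (26 * r)
  simp only [gAtThirteenHalves, Polynomial.IsRoot, Polynomial.eval_sub, Polynomial.eval_mul,
    Polynomial.eval_pow, Polynomial.eval_C, Polynomial.eval_X] at hr
  simp only [p, map_sub, map_mul, map_pow, Polynomial.aeval_X, map_ofNat]
  linear_combination 17576 * hr

theorem g_irreducible : Irreducible g := by
  rw [← MulEquiv.irreducible_iff polyInY, polyInY_g]
  refine gCubic_monic.irreducible_of_irreducible_map (eval fun _ => 13 / 2) _ ?_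
  rw [gCubic_map_eval]
  exact gAtThirteenHalves_irreducible

end Stmt18
end
end
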